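/- arXiv:2111.11213 — 3 statements merged into one kernel-verified Lean document; each statement's English description precedes it below -/
import Mathlib

section
/- A probability distribution α on a finite state space E is a quasi-stationary distribution of the sub-Markovian kernel K (i.e., α(y)·(Σ_x α(x)K(x,E)) = Σ_x α(x)K(x,y) for all y, with Σ_x α(x)K(x,E) > 0) if and only if α is a stationary distribution of the Markovian kernel K_α, i.e., α(y) = Σ_x α(x)K_α(x,y) for all y ∈ E. -/
/-- A probability distribution `α` on finite `E` is a quasi-stationary
distribution of the sub-Markovian kernel `K`
(i.e. `α(y)·(Σ_x α(x)K(x,E)) = Σ_x α(x)K(x,y)` for all `y`, with `Σ_x α(x)K(x,E) > 0`)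
iff `α` is a stationary distribution of the Markovian kernel
`K_α(x,y) = K(x,y) + (1 - K(x,E))·α(y)`. -/
theorem stmt2 {E : Type*} [Fintype E]
    (K : E → E → ℝ)
    (hK0 : ∀ x y, 0 ≤ K x y)
    (hK1 : ∀ x, ∑ y, K x y ≤ 1)
    (α : E → ℝ)
    (hα0 : ∀ x, 0 ≤ α x) (hα1 : ∑ x, α x = 1)
    (hpos : 0 < ∑ x, α x * ∑ y, K x y) :
    (∀ y, α y * (∑ x, α x * ∑ y', K x y') = ∑ x, α x * K x y) ↔
    (∀ y, α y = ∑ x, α x * (K x y + (1 - ∑ y', K x y') * α y)) := by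
  have key : ∀ y, ∑ x, α x * (K x y + (1 - ∑ y', K x y') * α y)
      = (∑ x, α x * K x y) + α y - α y * (∑ x, α x * ∑ y', K x y') := by
    intro y
    have : ∑ x, α x * (K x y + (1 - ∑ y', K x y') * α y)
        = (∑ x, α x * K x y) + (∑ x, α x) * α y
          - α y * (∑ x, α x * ∑ y', K x y') := by
      rw [Finset.sum_mul, Finset.mul_sum]
      rw [← Finset.sum_add_distrib, ← Finset.sum_sub_distrib]
      apply Finset.sum_congr rfl
      intro x _
      ring
    rw [this, hα1, one_mul]
  constructor
  · intro h y
    rw [key y, ← h y]; ring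
  · intro h y
    have := h y
    rw [key y] at this
    linarith
end

section
/- Policy gradient identity: let θ ↦ P_θ and θ ↦ Q_θ be smooth families of positive Markovian kernels on finite E, μ_θ the stationary distribution of P_θ (smooth in θ), R_θ(x,y) := -ln(P_θ(y|x)/Q_θ(y|x)), and r(θ) := Σ_{x,y} μ_θ(x)P_θ(y|x)R_θ(x,y). Suppose V : E → ℝ satisfies the Bellman equation V(x) = Σ_y P_θ(y|x)[V(y)+R_θ(x,y)-r(θ)] for all x. Then ∇_θ r(θ) = Σ_{x,y} μ_θ(x)P_θ(y|x)[ (V(y)-V(x)+R_θ(x,y)-r(θ)) ∇_θ ln P_θ(y|x) + ∇_θ ln Q_θ(y|x) ]. -/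
/-! Write `π(x,y) = μ(x)P(y|x)` and `g = ∇ ln P`, so that `∇P = P g`. Differentiating
`r = Σ π R` gives `Σ π ∇R + Σ R ∇π` with `∇π = π g + P ∇μ(x)` and `∇R = ∇ ln Q - g`; the score
`g` has zero mean under each row of `P`, so `Σ π g = 0`. The term `Σ R P ∇μ(x)` is rewritten
with the Bellman equation as `Σ ∇μ(x) (V(x) - Σ P V + r)`, and differentiating the stationarity
relation `Σ_x π(x,y) = μ(y)` (together with `Σ ∇μ = 0`) turns it into `Σ π V(y) g`. -/

open Finset

theorem HasFDerivAt.eq_zero_of_forall_eq {F G : Type*} [NormedAddCommGroup F]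
    [NormedSpace ℝ F] [NormedAddCommGroup G] [NormedSpace ℝ G] {f : F → G} {f' : F →L[ℝ] G}
    {θ : F} (hf : HasFDerivAt f f' θ) {c : G} (hc : ∀ θ', f θ' = c) : f' = 0 := by
  rw [show f = fun _ => c from funext hc] at hf
  exact hf.unique (hasFDerivAt_const c θ)

theorem hasFDerivAt_smul_fderiv_log {F : Type*} [NormedAddCommGroup F] [NormedSpace ℝ F]
    {f : F → ℝ} {θ : F} (hf : DifferentiableAt ℝ f θ) (hθ : f θ ≠ 0) :
    HasFDerivAt f (f θ • fderiv ℝ (fun θ' => Real.log (f θ')) θ) θ := by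
  rw [(hf.hasFDerivAt.log hθ).fderiv, smul_smul, mul_inv_cancel₀ hθ, one_smul]
  exact hf.hasFDerivAt

theorem hasFDerivAt_neg_log_div {F : Type*} [NormedAddCommGroup F] [NormedSpace ℝ F]
    {p q : F → ℝ} {θ : F} (hp : DifferentiableAt ℝ p θ) (hq : DifferentiableAt ℝ q θ)
    (hp0 : ∀ θ', p θ' ≠ 0) (hq0 : ∀ θ', q θ' ≠ 0) :
    HasFDerivAt (fun θ' => -Real.log (p θ' / q θ'))
      (fderiv ℝ (fun θ' => Real.log (q θ')) θ - fderiv ℝ (fun θ' => Real.log (p θ')) θ) θ := by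
  have hlog_div : (fun θ' => -Real.log (p θ' / q θ'))
      = fun θ' => Real.log (q θ') - Real.log (p θ') :=
    funext fun θ' => by rw [Real.log_div (hp0 θ') (hq0 θ'), neg_sub]
  rw [hlog_div]
  exact (hq.log (hq0 θ)).hasFDerivAt.fun_sub (hp.log (hp0 θ)).hasFDerivAt

section MarkovReward

variable {E M : Type*} [Fintype E] [AddCommGroup M] [Module ℝ M]
  {μ V : E → ℝ} {P R : E → E → ℝ} {ρ : ℝ} {dμ : E → M} {g : E → E → M}

theorem sum_mul_reward_eq_of_bellman (hP : ∀ x, ∑ y, P x y = 1)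
    (hV : ∀ x, V x = ∑ y, P x y * (V y + R x y - ρ)) (x : E) :
    ∑ y, P x y * R x y = V x - ∑ y, P x y * V y + ρ := by
  have hsplit : ∑ y, P x y * (V y + R x y - ρ)
      = ∑ y, P x y * V y + ∑ y, P x y * R x y - ρ := by
    simp only [mul_add, mul_sub, sum_add_distrib, sum_sub_distrib, ← sum_mul, hP, one_mul]
  linarith [hV x]

theorem sum_sum_smul_score_eq_zero (hg : ∀ x, ∑ y, P x y • g x y = 0) :
    ∑ x, ∑ y, (μ x * P x y) • g x y = 0 := by
  simp [mul_smul, ← smul_sum, hg]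

/-- With `π(x,y) = μ(x)P(y|x)`, `g = ∇ ln P` and `dμ = ∇μ`, the left side is `Σ R ∇π`; the
hypotheses are the derivatives of `Σ_y P(y|x) = 1`, of `Σ μ = 1` and of stationarity. -/
theorem sum_reward_smul_eq_sum_advantage_smul (hP : ∀ x, ∑ y, P x y = 1)
    (hV : ∀ x, V x = ∑ y, P x y * (V y + R x y - ρ)) (hg : ∀ x, ∑ y, P x y • g x y = 0)
    (hdμ : ∑ x, dμ x = 0)
    (hstat : ∀ y, ∑ x, ((μ x * P x y) • g x y + P x y • dμ x) = dμ y) :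
    ∑ x, ∑ y, R x y • ((μ x * P x y) • g x y + P x y • dμ x)
      = ∑ x, ∑ y, (μ x * P x y) • ((V y - V x + R x y - ρ) • g x y) := by
  have hflow : ∀ y, ∑ x, (μ x * P x y) • g x y = dμ y - ∑ x, P x y • dμ x := fun y =>
    eq_sub_of_add_eq (by rw [← sum_add_distrib, hstat])
  have hdrift : ∑ x, (∑ y, P x y * R x y) • dμ x
      = ∑ x, ∑ y, (μ x * P x y) • (V y • g x y) := by
    calc ∑ x, (∑ y, P x y * R x y) • dμ x
        = ∑ x, V x • dμ x - ∑ x, ∑ y, (P x y * V y) • dμ x + ρ • ∑ x, dμ x := by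
          simp only [sum_mul_reward_eq_of_bellman hP hV, add_smul, sub_smul, sum_smul,
            sum_add_distrib, sum_sub_distrib, smul_sum]
      _ = ∑ y, V y • (dμ y - ∑ x, P x y • dμ x) := by
          simp only [hdμ, smul_zero, add_zero, smul_sub, sum_sub_distrib, smul_sum, smul_smul]
          rw [sum_comm (f := fun x y => (P x y * V y) • dμ x)]
          simp only [mul_comm]
      _ = ∑ x, ∑ y, (μ x * P x y) • (V y • g x y) := by
          simp only [← hflow, smul_sum, smul_comm (V _)]
          exact sum_comm
  have hcentre : ∑ x, ∑ y, (μ x * P x y) • ((V x + ρ) • g x y) = 0 := by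
    simp [smul_comm _ (V _ + ρ), ← smul_sum, mul_smul, hg]
  calc ∑ x, ∑ y, R x y • ((μ x * P x y) • g x y + P x y • dμ x)
      = ∑ x, ∑ y, (μ x * P x y) • (R x y • g x y) + ∑ x, (∑ y, P x y * R x y) • dμ x := by
        simp only [smul_add, sum_add_distrib, smul_comm (R _ _), sum_smul, smul_smul, mul_comm]
    _ = ∑ x, ∑ y, (μ x * P x y) • ((V y - V x + R x y - ρ) • g x y) := by
        rw [hdrift, ← sub_zero (_ + _), ← hcentre]
        simp only [← sum_add_distrib, ← sum_sub_distrib, ← smul_add, ← smul_sub, ← add_smul,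
          ← sub_smul]
        congr! 4
        ring

end MarkovReward

theorem stmt9_general {E : Type*} [Fintype E] {d : ℕ}
    (P Q : EuclideanSpace ℝ (Fin d) → E → E → ℝ)
    (hPpos : ∀ θ x y, 0 < P θ x y) (hPstoch : ∀ θ x, ∑ y, P θ x y = 1)
    (hQpos : ∀ θ x y, 0 < Q θ x y)
    (hPdiff : ∀ x y, Differentiable ℝ fun θ => P θ x y)
    (hQdiff : ∀ x y, Differentiable ℝ fun θ => Q θ x y)
    (μ : EuclideanSpace ℝ (Fin d) → E → ℝ)
    (hμ1 : ∀ θ, ∑ x, μ θ x = 1)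
    (hμstat : ∀ θ y, ∑ x, μ θ x * P θ x y = μ θ y)
    (hμdiff : ∀ x, Differentiable ℝ fun θ => μ θ x)
    (R : EuclideanSpace ℝ (Fin d) → E → E → ℝ)
    (hR : ∀ θ x y, R θ x y = -Real.log (P θ x y / Q θ x y))
    (r : EuclideanSpace ℝ (Fin d) → ℝ)
    (hr : ∀ θ, r θ = ∑ x, ∑ y, μ θ x * P θ x y * R θ x y)
    (θ : EuclideanSpace ℝ (Fin d))
    (V : E → ℝ)
    (hV : ∀ x, V x = ∑ y, P θ x y * (V y + R θ x y - r θ)) :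
    fderiv ℝ r θ
      = ∑ x, ∑ y, (μ θ x * P θ x y) •
          ((V y - V x + R θ x y - r θ) • fderiv ℝ (fun θ' => Real.log (P θ' x y)) θ
            + fderiv ℝ (fun θ' => Real.log (Q θ' x y)) θ) := by
  set g := fun x y => fderiv ℝ (fun θ' => Real.log (P θ' x y)) θ
  set h := fun x y => fderiv ℝ (fun θ' => Real.log (Q θ' x y)) θ
  have hμd x := ((hμdiff x) θ).hasFDerivAt
  have hPd x y : HasFDerivAt (P · x y) (P θ x y • g x y) θ :=
    hasFDerivAt_smul_fderiv_log (hPdiff x y θ) (hPpos θ x y).ne'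
  have hπd x y : HasFDerivAt (fun θ' => μ θ' x * P θ' x y)
      ((μ θ x * P θ x y) • g x y + P θ x y • fderiv ℝ (μ · x) θ) θ := by
    simpa only [smul_smul] using (hμd x).fun_mul (hPd x y)
  have hRd x y : HasFDerivAt (R · x y) (h x y - g x y) θ := by
    rw [funext (hR · x y)]
    exact hasFDerivAt_neg_log_div (hPdiff x y θ) (hQdiff x y θ) (hPpos · x y |>.ne')
      (hQpos · x y |>.ne')
  have hg x : ∑ y, P θ x y • g x y = 0 :=
    (HasFDerivAt.fun_sum fun y _ => hPd x y).eq_zero_of_forall_eq (hPstoch · x)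
  have hdμ := (HasFDerivAt.fun_sum fun x _ => hμd x).eq_zero_of_forall_eq hμ1
  have hstat y := (funext (hμstat · y) ▸ HasFDerivAt.fun_sum (u := univ) fun x _ => hπd x y).unique
    (hμd y)
  have hrd : HasFDerivAt r (∑ x, ∑ y, ((μ θ x * P θ x y) • (h x y - g x y)
      + R θ x y • ((μ θ x * P θ x y) • g x y + P θ x y • fderiv ℝ (μ · x) θ))) θ := by
    rw [funext hr]
    exact HasFDerivAt.fun_sum fun x _ => HasFDerivAt.fun_sum fun y _ => (hπd x y).mul (hRd x y)
  rw [hrd.fderiv]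
  simp only [sum_add_distrib]
  rw [sum_reward_smul_eq_sum_advantage_smul (hPstoch θ) hV hg hdμ hstat]
  simp only [smul_sub, smul_add, sum_add_distrib, sum_sub_distrib, sum_sum_smul_score_eq_zero hg,
    sub_zero]
  exact add_comm _ _

/-- policy gradient identity: let `θ ↦ P_θ` and `θ ↦ Q_θ` be smooth
families of strictly positive Markov kernels on finite `E`, `μ_θ` the (smooth in `θ`)
stationary distribution of `P_θ`, `R_θ(x,y) := -ln(P_θ(y|x)/Q_θ(y|x))`, and
`r(θ) := Σ_{x,y} μ_θ(x)P_θ(y|x)R_θ(x,y)`. If `V : E → ℝ` satisfies the Bellman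
equation `V(x) = Σ_y P_θ(y|x)[V(y)+R_θ(x,y)-r(θ)]` at the given `θ`, then
`∇_θ r(θ) = Σ_{x,y} μ_θ(x)P_θ(y|x)[(V(y)-V(x)+R_θ(x,y)-r(θ)) ∇_θ ln P_θ(y|x)
  + ∇_θ ln Q_θ(y|x)]`. -/
theorem stmt9 {E : Type*} [Fintype E] [Nonempty E] {d : ℕ}
    (P Q : EuclideanSpace ℝ (Fin d) → E → E → ℝ)
    (hPpos : ∀ θ x y, 0 < P θ x y) (hPstoch : ∀ θ x, ∑ y, P θ x y = 1)
    (hQpos : ∀ θ x y, 0 < Q θ x y) (hQstoch : ∀ θ x, ∑ y, Q θ x y = 1)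
    (hPdiff : ∀ x y, Differentiable ℝ fun θ => P θ x y)
    (hQdiff : ∀ x y, Differentiable ℝ fun θ => Q θ x y)
    (μ : EuclideanSpace ℝ (Fin d) → E → ℝ)
    (hμ0 : ∀ θ x, 0 < μ θ x) (hμ1 : ∀ θ, ∑ x, μ θ x = 1)
    (hμstat : ∀ θ y, ∑ x, μ θ x * P θ x y = μ θ y)
    (hμuniq : ∀ θ (ν : E → ℝ), (∀ x, 0 ≤ ν x) → ∑ x, ν x = 1 →
      (∀ y, ∑ x, ν x * P θ x y = ν y) → ν = μ θ)
    (hμdiff : ∀ x, Differentiable ℝ fun θ => μ θ x)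
    (R : EuclideanSpace ℝ (Fin d) → E → E → ℝ)
    (hR : ∀ θ x y, R θ x y = -Real.log (P θ x y / Q θ x y))
    (r : EuclideanSpace ℝ (Fin d) → ℝ)
    (hr : ∀ θ, r θ = ∑ x, ∑ y, μ θ x * P θ x y * R θ x y)
    (θ : EuclideanSpace ℝ (Fin d))
    (V : E → ℝ)
    (hV : ∀ x, V x = ∑ y, P θ x y * (V y + R θ x y - r θ)) :
    fderiv ℝ r θ
      = ∑ x, ∑ y, (μ θ x * P θ x y) •
          ((V y - V x + R θ x y - r θ) • fderiv ℝ (fun θ' => Real.log (P θ' x y)) θ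
            + fderiv ℝ (fun θ' => Real.log (Q θ' x y)) θ) :=
  stmt9_general P Q hPpos hPstoch hQpos hPdiff hQdiff μ hμ1 hμstat hμdiff R hR r hr θ V hV
end

section
/- Continuity of the stationary-distribution map: let K be a sub-Markovian kernel on finite E such that for every probability distribution α' on E, K_{α'} is irreducible and aperiodic with unique stationary distribution Γ(α'). Then the map α' ↦ Γ(α') is continuous on the probability simplex, and by Brouwer's fixed point theorem there exists α with α = Γ(α), which is then a quasi-stationary distribution of K. -/
/-!
`Γ` takes values in the compact simplex, and its graph is cut out by the stationarity equation
`q K_p = q`, which is continuous in `(p, q)` and, by hypothesis, uniquely solvable in `q`; a map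
with compact range and closed graph is continuous.

Brouwer is not needed for the fixed point: a Perron–Frobenius left eigenvector `α K = λ α` with
`α` in the simplex (obtained for positive matrices by maximising the Collatz–Wielandt ratio, and
for nonnegative ones by a limit) satisfies `λ = ∑ₓ α(x) K(x, E)`, so `K_α` returns the killed mass
`1 - λ` along `α` and `α K_α = α`. Uniqueness then gives `Γ α = α`.
-/

open Filter Topology Matrix

lemma continuousOn_of_isCompact_of_isClosed_rel {X Y : Type*} [TopologicalSpace X]
    [TopologicalSpace Y] {f : X → Y} {s : Set X} {t : Set Y} {R : Set (X × Y)}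
    (ht : IsCompact t) (hR : IsClosed R) (hst : Set.MapsTo f s t)
    (hfR : ∀ x ∈ s, (x, f x) ∈ R) (huniq : ∀ x ∈ s, ∀ y ∈ t, (x, y) ∈ R → y = f x) :
    ContinuousOn f s := by
  intro x hx
  refine ht.tendsto_nhds_of_unique_mapClusterPt (eventually_mem_nhdsWithin.mono hst)
    fun y hy hxy => huniq x hx y hy ?_
  obtain ⟨U, hUs, hUy⟩ := mapClusterPt_iff_ultrafilter.1 hxy
  have hUx : Tendsto id (U : Filter X) (𝓝 x) :=
    tendsto_id.mono_left (hUs.trans nhdsWithin_le_nhds)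
  exact hR.mem_of_tendsto (hUx.prodMk_nhds hUy)
    (Eventually.mono (hUs eventually_mem_nhdsWithin) hfR)

section PerronFrobenius

variable {E : Type*} [Fintype E]

lemma vecMul_pos_of_pos {M : Matrix E E ℝ} (hM : ∀ i j, 0 < M i j) {v : E → ℝ} (hv : 0 ≤ v)
    (hv0 : v ≠ 0) (j : E) : 0 < (v ᵥ* M) j := by
  obtain ⟨i, hi⟩ : ∃ i, v i ≠ 0 := Function.ne_iff.1 hv0
  exact Finset.sum_pos' (fun k _ => mul_nonneg (hv k) (hM k j).le)
    ⟨i, Finset.mem_univ i, mul_pos ((hv i).lt_of_ne' hi) (hM i j)⟩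

lemma sum_vecMul_apply (M : Matrix E E ℝ) (q : E → ℝ) :
    ∑ j, (q ᵥ* M) j = ∑ i, q i * ∑ j, M i j := by
  simp only [vecMul, dotProduct, Finset.mul_sum]; exact Finset.sum_comm

lemma le_sum_sum_of_smul_le_vecMul {M : Matrix E E ℝ} (hM : ∀ i j, 0 ≤ M i j) {p : E → ℝ}
    (hp : p ∈ stdSimplex ℝ E) {r : ℝ} (h : r • p ≤ p ᵥ* M) : r ≤ ∑ i, ∑ j, M i j :=
  calc r = ∑ j, (r • p) j := by simp [← Finset.mul_sum, hp.2]
    _ ≤ ∑ j, (p ᵥ* M) j := Finset.sum_le_sum fun j _ => h j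
    _ = ∑ i, p i * ∑ j, M i j := sum_vecMul_apply M p
    _ ≤ ∑ i, ∑ j, M i j := Finset.sum_le_sum fun i _ =>
      mul_le_of_le_one_left (Finset.sum_nonneg fun j _ => hM i j)
        (mem_Icc_of_mem_stdSimplex hp i).2

lemma eq_sum_vecMul_of_vecMul_eq_smul {M : Matrix E E ℝ} {p : E → ℝ} (hp : p ∈ stdSimplex ℝ E)
    {r : ℝ} (h : p ᵥ* M = r • p) : r = ∑ j, (p ᵥ* M) j := by
  simp [h, ← Finset.mul_sum, hp.2]

/-- One Collatz–Wielandt step: `q = p M` does better, as `q M - r q = (p M - r p) M` is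
strictly positive. -/
lemma exists_lt_smul_le_vecMul_of_pos {M : Matrix E E ℝ} (hM : ∀ i j, 0 < M i j) {p : E → ℝ}
    (hp : p ∈ stdSimplex ℝ E) {r : ℝ} (h : r • p ≤ p ᵥ* M) (hne : p ᵥ* M ≠ r • p) :
    ∃ r' > r, ∃ q ∈ stdSimplex ℝ E, r' • q ≤ q ᵥ* M := by
  set d := p ᵥ* M - r • p
  set q := p ᵥ* M
  have hp0 : p ≠ 0 := by rintro rfl; simpa using hp.2
  have hq : ∀ j, 0 < q j := vecMul_pos_of_pos hM hp.1 hp0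
  have hdM : ∀ j, 0 < (d ᵥ* M) j := vecMul_pos_of_pos hM (sub_nonneg.2 h) (sub_ne_zero.2 hne)
  have hqM : q ᵥ* M = r • q + d ᵥ* M := by simp [d, q, sub_vecMul, smul_vecMul]
  obtain ⟨ε, hε, hεq⟩ : ∃ ε : ℝ, 0 < ε ∧ ε • q ≤ d ᵥ* M := by
    have hsmall : ∀ᶠ ε in 𝓝[>] (0 : ℝ), ∀ j, ε * q j < (d ᵥ* M) j :=
      eventually_all.2 fun j =>
        ((continuous_id.mul continuous_const).tendsto' (0 : ℝ) 0 (by simp)).mono_left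
          nhdsWithin_le_nhds |>.eventually_lt_const (hdM j)
    obtain ⟨ε, hεj, hε⟩ := (hsmall.and self_mem_nhdsWithin).exists
    exact ⟨ε, hε, fun j => (hεj j).le⟩
  obtain ⟨i⟩ : Nonempty E := (Function.ne_iff.1 hp0).nonempty
  set c := ∑ j, q j
  have hc : 0 < c := Finset.sum_pos (fun j _ => hq j) ⟨i, Finset.mem_univ i⟩
  refine ⟨r + ε, by linarith, c⁻¹ • q,
    ⟨fun j => by simpa using (mul_pos (inv_pos.2 hc) (hq j)).le,
      by simp [← Finset.mul_sum, c, hc.ne']⟩, ?_⟩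
  have key : (r + ε) • q ≤ q ᵥ* M := by
    rw [hqM, add_smul]; exact add_le_add_right hεq _
  calc (r + ε) • c⁻¹ • q = c⁻¹ • ((r + ε) • q) := smul_comm _ _ _
    _ ≤ c⁻¹ • (q ᵥ* M) := smul_le_smul_of_nonneg_left key (inv_nonneg.2 hc.le)
    _ = (c⁻¹ • q) ᵥ* M := (smul_vecMul _ _ _).symm

lemma exists_mem_stdSimplex_vecMul_eq_smul_of_pos [Nonempty E] {M : Matrix E E ℝ}
    (hM : ∀ i j, 0 < M i j) : ∃ p ∈ stdSimplex ℝ E, ∃ r : ℝ, p ᵥ* M = r • p := by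
  classical
  set T : Set (ℝ × (E → ℝ)) :=
    (Set.Icc 0 (∑ i, ∑ j, M i j) ×ˢ stdSimplex ℝ E) ∩ {z | z.1 • z.2 ≤ z.2 ᵥ* M}
  have hT : IsCompact T := (isCompact_Icc.prod (isCompact_stdSimplex ℝ E)).inter_right
    (isClosed_le (by fun_prop) (by fun_prop))
  have hvecMul : ∀ p ∈ stdSimplex ℝ E, 0 ≤ p ᵥ* M := fun p hp j =>
    Finset.sum_nonneg fun i _ => mul_nonneg (hp.1 i) (hM i j).le
  obtain ⟨i⟩ := ‹Nonempty E›
  have hTne : T.Nonempty := ⟨(0, Pi.single i 1),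
    ⟨⟨le_rfl, Finset.sum_nonneg fun i _ => Finset.sum_nonneg fun j _ => (hM i j).le⟩,
      single_mem_stdSimplex ℝ i⟩, by simpa using hvecMul _ (single_mem_stdSimplex ℝ i)⟩
  obtain ⟨⟨r, p⟩, ⟨⟨⟨hr, -⟩, hp⟩, hrp⟩, hmax⟩ :=
    hT.exists_isMaxOn hTne continuous_fst.continuousOn
  refine ⟨p, hp, r, by_contra fun hne => ?_⟩
  obtain ⟨r', hr', q, hq, hr'q⟩ := exists_lt_smul_le_vecMul_of_pos hM hp hrp hne
  have : r' ≤ r := hmax (a := (r', q))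
    ⟨⟨⟨hr.trans hr'.le, le_sum_sum_of_smul_le_vecMul (fun i j => (hM i j).le) hq hr'q⟩, hq⟩, hr'q⟩
  linarith

lemma exists_mem_stdSimplex_vecMul_eq_smul_of_nonneg [Nonempty E] {M : Matrix E E ℝ}
    (hM : ∀ i j, 0 ≤ M i j) : ∃ p ∈ stdSimplex ℝ E, p ᵥ* M = (∑ j, (p ᵥ* M) j) • p := by
  set Mₙ : ℕ → Matrix E E ℝ := fun n => M + (1 / ((n : ℝ) + 1)) • of fun _ _ => 1
  have hMₙ : Tendsto Mₙ atTop (𝓝 M) := by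
    simpa [Mₙ] using (tendsto_const_nhds (x := M)).add
      ((tendsto_one_div_add_atTop_nhds_zero_nat (𝕜 := ℝ)).smul_const
        (of fun _ _ => (1 : ℝ) : Matrix E E ℝ))
  have hMₙpos : ∀ n i j, 0 < Mₙ n i j := fun n i j => by
    simpa [Mₙ] using
      add_pos_of_nonneg_of_pos (hM i j) (by positivity : (0 : ℝ) < 1 / ((n : ℝ) + 1))
  choose p hp r hr using fun n => exists_mem_stdSimplex_vecMul_eq_smul_of_pos (hMₙpos n)
  obtain ⟨q, hq, φ, hφ, hpq⟩ := (isCompact_stdSimplex ℝ E).tendsto_subseq hp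
  have hclosed :
      IsClosed {z : Matrix E E ℝ × (E → ℝ) | z.2 ᵥ* z.1 = (∑ j, (z.2 ᵥ* z.1) j) • z.2} :=
    isClosed_eq (by fun_prop) (by fun_prop)
  refine ⟨q, hq, hclosed.mem_of_tendsto ((hMₙ.comp hφ.tendsto_atTop).prodMk_nhds hpq)
    (Eventually.of_forall fun n => ?_)⟩
  simp only [Function.comp_apply, Set.mem_ofPred_eq]
  rw [← eq_sum_vecMul_of_vecMul_eq_smul (hp (φ n)) (hr (φ n))]
  exact hr (φ n)

end PerronFrobenius

section Resurrection

variable {E : Type*} [Fintype E]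

/-- The paper's `K_p`: the mass `1 - K(x, E)` killed at `x` is redistributed according to `p`. -/
def resurrectedKernel (K : E → E → ℝ) (p : E → ℝ) : Matrix E E ℝ :=
  of fun x y => K x y + (1 - ∑ y', K x y') * p y

lemma continuous_resurrectedKernel (K : E → E → ℝ) :
    Continuous (resurrectedKernel K) := by
  unfold resurrectedKernel; fun_prop

lemma vecMul_resurrectedKernel (K : E → E → ℝ) (p q : E → ℝ) :
    q ᵥ* resurrectedKernel K p = q ᵥ* of K + (∑ x, q x * (1 - ∑ y, K x y)) • p := by
  ext y
  simp [resurrectedKernel, vecMul, dotProduct, mul_add, Finset.sum_add_distrib, Finset.sum_mul,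
    mul_assoc]

end Resurrection

theorem stmt19_general {E : Type*} [Fintype E] [Nonempty E]
    (K : E → E → ℝ)
    (hK0 : ∀ x y, 0 ≤ K x y)
    (Γ : (E → ℝ) → (E → ℝ))
    (hΓ : ∀ p : E → ℝ, (∀ x, 0 ≤ p x) → ∑ x, p x = 1 →
      ((∀ x, 0 ≤ Γ p x) ∧ ∑ x, Γ p x = 1) ∧
      (∀ y, ∑ x, Γ p x * (K x y + (1 - ∑ y', K x y') * p y) = Γ p y) ∧
      (∀ q : E → ℝ, (∀ x, 0 ≤ q x) → ∑ x, q x = 1 →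
        (∀ y, ∑ x, q x * (K x y + (1 - ∑ y', K x y') * p y) = q y) → q = Γ p)) :
    ContinuousOn Γ {p : E → ℝ | (∀ x, 0 ≤ p x) ∧ ∑ x, p x = 1} ∧
    ∃ α : E → ℝ, (∀ x, 0 ≤ α x) ∧ ∑ x, α x = 1 ∧ Γ α = α ∧
      ∀ y, α y * (∑ x, α x * ∑ y', K x y') = ∑ x, α x * K x y := by
  have hΓ' : ∀ p ∈ stdSimplex ℝ E, Γ p ∈ stdSimplex ℝ E ∧ Γ p ᵥ* resurrectedKernel K p = Γ p ∧
      ∀ q ∈ stdSimplex ℝ E, q ᵥ* resurrectedKernel K p = q → q = Γ p := fun p hp =>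
    let h := hΓ p hp.1 hp.2
    ⟨h.1, funext h.2.1, fun q hq hqp => h.2.2 q hq.1 hq.2 (congrFun hqp)⟩
  have hstatClosed : IsClosed {z : (E → ℝ) × (E → ℝ) | z.2 ᵥ* resurrectedKernel K z.1 = z.2} :=
    isClosed_eq (continuous_snd.matrix_vecMul
      ((continuous_resurrectedKernel K).comp continuous_fst)) continuous_snd
  refine ⟨continuousOn_of_isCompact_of_isClosed_rel (isCompact_stdSimplex ℝ E) hstatClosed
    (fun p hp => (hΓ' p hp).1) (fun p hp => (hΓ' p hp).2.1)
    (fun p hp q hq => (hΓ' p hp).2.2 q hq), ?_⟩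
  obtain ⟨α, hα, heig⟩ := exists_mem_stdSimplex_vecMul_eq_smul_of_nonneg (M := of K) hK0
  rw [sum_vecMul_apply] at heig
  have hstat : α ᵥ* resurrectedKernel K α = α := by
    rw [vecMul_resurrectedKernel, heig, ← add_smul]
    simp [mul_sub, Finset.sum_sub_distrib, hα.2]
  refine ⟨α, hα.1, hα.2, ((hΓ' α hα).2.2 α hα hstat).symm, fun y => ?_⟩
  rw [mul_comm]
  exact (congrFun heig y).symm

/-- continuity of the stationary-distribution map and existence of a
QSD: let `K` be sub-Markovian on finite `E` such that for every probability
distribution `α'` on `E` the Markovian kernel `K_{α'}(x,y) = K(x,y)+(1-K(x,E))α'(y)`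
is irreducible and aperiodic (primitive) with unique stationary distribution `Γ(α')`.
Then `α' ↦ Γ(α')` is continuous on the probability simplex, and there exists a fixed
point `α = Γ(α)`, which is then a quasi-stationary distribution of `K`. -/
theorem stmt19 {E : Type*} [Fintype E] [DecidableEq E] [Nonempty E]
    (K : E → E → ℝ)
    (hK0 : ∀ x y, 0 ≤ K x y)
    (hK1 : ∀ x, ∑ y, K x y ≤ 1)
    (Γ : (E → ℝ) → (E → ℝ))
    (hprim : ∀ p : E → ℝ, (∀ x, 0 ≤ p x) → ∑ x, p x = 1 →
      ∃ n, 0 < n ∧ ∀ x y,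
        0 < ((Matrix.of fun x y => K x y + (1 - ∑ y', K x y') * p y) ^ n) x y)
    (hΓ : ∀ p : E → ℝ, (∀ x, 0 ≤ p x) → ∑ x, p x = 1 →
      ((∀ x, 0 ≤ Γ p x) ∧ ∑ x, Γ p x = 1) ∧
      (∀ y, ∑ x, Γ p x * (K x y + (1 - ∑ y', K x y') * p y) = Γ p y) ∧
      (∀ q : E → ℝ, (∀ x, 0 ≤ q x) → ∑ x, q x = 1 →
        (∀ y, ∑ x, q x * (K x y + (1 - ∑ y', K x y') * p y) = q y) → q = Γ p)) :
    ContinuousOn Γ {p : E → ℝ | (∀ x, 0 ≤ p x) ∧ ∑ x, p x = 1} ∧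
    ∃ α : E → ℝ, (∀ x, 0 ≤ α x) ∧ ∑ x, α x = 1 ∧ Γ α = α ∧
      ∀ y, α y * (∑ x, α x * ∑ y', K x y') = ∑ x, α x * K x y :=
  stmt19_general K hK0 Γ hΓ
end
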